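/- Let $a \in (-1, 1) \setminus \{0\}$ and define $c(a) = \frac{\pi^2}{6(1-a^2)} - \left(\frac{\ln(1-a)}{a}\right)^2$. Then $c(a) > 0$. Consequently, the matrix $J = 2\sigma^2 \begin{pmatrix} \frac{1}{1-a^2} & -\frac{\ln(1-a)}{a} \\ -\frac{\ln(1-a)}{a} & \frac{\pi^2}{6} \end{pmatrix}$ (with $\sigma^2 > 0$) is positive definite and its inverse equals $\frac{1}{2\sigma^2 c(a)} \begin{pmatrix} \frac{\pi^2}{6} & \frac{\ln(1-a)}{a} \\ \frac{\ln(1-a)}{a} & \frac{1}{1-a^2} \end{pmatrix}$. -/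

import Mathlib

/-!
With `f n = a ^ n` and `g n = 1 / (n + 1)` one has `∑ f² = 1 / (1 - a²)`, `∑ g² = π² / 6` and
`∑ f g = -log (1 - a) / a`, so `c(a)` is `∑ f² ∑ g² - (∑ f g)²`, positive by the strict
Cauchy–Schwarz inequality because `f` and `g` are not proportional. Thus `J / (2σ²)` is a
symmetric `2 × 2` matrix with positive diagonal and determinant `c(a) > 0`, hence positive
definite, and its inverse is the adjugate divided by the determinant.
-/

open Real Matrix

theorem HasSum.pos_of_sq {ι : Type*} {u : ι → ℝ} {S : ℝ} (hS : HasSum (fun n => u n ^ 2) S)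
    {k : ι} (hk : u k ≠ 0) : 0 < S :=
  hasSum_lt (fun n => sq_nonneg (u n)) (pow_two_pos_of_ne_zero hk) hasSum_zero hS

theorem sq_lt_mul_of_hasSum_of_not_proportional {ι : Type*} {f g : ι → ℝ} {A B C : ℝ}
    (hA : HasSum (fun n => f n ^ 2) A) (hB : HasSum (fun n => g n ^ 2) B)
    (hC : HasSum (fun n => f n * g n) C) {i j : ι} (hij : f i * g j ≠ f j * g i) :
    C ^ 2 < A * B := by
  obtain ⟨k, hk⟩ : ∃ k, g k ≠ 0 := by
    by_contra! h
    exact hij (by simp [h])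
  have hB_pos : 0 < B := hB.pos_of_sq hk
  -- `B f - C g` is `B` times the residual of the projection of `f` onto `g`
  have hres : HasSum (fun n => (B * f n - C * g n) ^ 2) (B * (A * B - C ^ 2)) := by
    rw [show B * (A * B - C ^ 2) = B ^ 2 * A - 2 * B * C * C + C ^ 2 * B by ring]
    exact (((hA.mul_left _).sub (hC.mul_left _)).add (hB.mul_left _)).congr_fun fun n => by ring
  obtain ⟨m, hm⟩ : ∃ m, B * f m - C * g m ≠ 0 := by
    by_contra! h
    exact hij (mul_left_cancel₀ hB_pos.ne' (by linear_combination g j * h i - g i * h j))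
  nlinarith [hres.pos_of_sq hm]

theorem hasSum_sq_pow {a : ℝ} (ha : |a| < 1) :
    HasSum (fun n : ℕ => (a ^ n) ^ 2) (1 - a ^ 2)⁻¹ := by
  have ha2 : a ^ 2 < 1 := by simpa [sq_abs] using pow_lt_one₀ (abs_nonneg a) ha two_ne_zero
  simpa [← pow_mul, mul_comm] using hasSum_geometric_of_lt_one (sq_nonneg a) ha2

theorem hasSum_inv_succ_sq : HasSum (fun n : ℕ => ((n : ℝ) + 1)⁻¹ ^ 2) (π ^ 2 / 6) := by
  simpa [one_div, inv_pow] using (hasSum_nat_add_iff' 1).mpr hasSum_zeta_two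

theorem hasSum_pow_mul_inv_succ {a : ℝ} (ha : |a| < 1) (ha0 : a ≠ 0) :
    HasSum (fun n : ℕ => a ^ n * ((n : ℝ) + 1)⁻¹) (-(log (1 - a) / a)) := by
  rw [← neg_div]
  refine ((hasSum_pow_div_log_of_abs_lt_one ha).div_const a).congr_fun fun n => ?_
  field_simp
  ring

theorem exists_pow_ne_inv_succ (a : ℝ) : ∃ j : ℕ, a ^ j ≠ ((j : ℝ) + 1)⁻¹ := by
  by_cases h : a = 1 / 2
  · exact ⟨2, by norm_num [h]⟩
  · exact ⟨1, by norm_num [h]⟩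

theorem Matrix.posDef_fin_two_of {p q r : ℝ} (hp : 0 < p) (hdet : q ^ 2 < p * r) :
    (!![p, q; q, r]).PosDef := by
  refine .of_dotProduct_mulVec_pos ?_ fun x hx => ?_
  · ext i j
    fin_cases i <;> fin_cases j <;> rfl
  have hquad : star x ⬝ᵥ (!![p, q; q, r] *ᵥ x) =
      p * x 0 ^ 2 + 2 * q * x 0 * x 1 + r * x 1 ^ 2 := by
    simp [dotProduct, Fin.sum_univ_two, mulVec]
    ring
  rw [hquad]
  by_cases hx1 : x 1 = 0
  · have hx0 : x 0 ≠ 0 := fun hx0 => hx (by ext i; fin_cases i <;> simp [hx0, hx1])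
    simpa [hx1] using mul_pos hp (pow_two_pos_of_ne_zero hx0)
  -- completing the square: `p Q(x) = (p x₀ + q x₁)² + (p r - q²) x₁²`
  · refine pos_of_mul_pos_right (a := p) ?_ hp.le
    nlinarith [sq_nonneg (p * x 0 + q * x 1), pow_two_pos_of_ne_zero hx1]

theorem Matrix.inv_smul_fin_two_symm {K : Type*} [Field K] (k p q r : K) :
    (k • !![p, q; q, r])⁻¹ = (k * (p * r - q ^ 2))⁻¹ • !![r, -q; -q, p] := by
  rw [inv_def, adjugate_smul, det_smul, adjugate_fin_two_of, det_fin_two_of,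
    Ring.inverse_eq_inv', smul_smul, Fintype.card_fin]
  congr 1
  rcases eq_or_ne k 0 with rfl | hk
  · simp
  · field_simp
    ring

/-- Positivity of `c(a) = π²/(6(1-a²)) - (ln(1-a)/a)²` for `a ∈ (-1,1) \ {0}`,
positive-definiteness of the FARIMA(1,d,0) information matrix `J`, and the explicit
formula for its inverse. -/
theorem farima_information_matrix (a σ2 : ℝ) (ha1 : -1 < a) (ha2 : a < 1) (ha0 : a ≠ 0)
    (hσ : 0 < σ2) :
    0 < Real.pi ^ 2 / (6 * (1 - a ^ 2)) - (Real.log (1 - a) / a) ^ 2 ∧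
    Matrix.PosDef ((2 * σ2) •
      !![1 / (1 - a ^ 2), -(Real.log (1 - a) / a);
         -(Real.log (1 - a) / a), Real.pi ^ 2 / 6]) ∧
    ((2 * σ2) •
      !![1 / (1 - a ^ 2), -(Real.log (1 - a) / a);
         -(Real.log (1 - a) / a), Real.pi ^ 2 / 6])⁻¹ =
      (1 / (2 * σ2 * (Real.pi ^ 2 / (6 * (1 - a ^ 2)) - (Real.log (1 - a) / a) ^ 2))) •
      !![Real.pi ^ 2 / 6, Real.log (1 - a) / a;
         Real.log (1 - a) / a, 1 / (1 - a ^ 2)] := by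
  have ha : |a| < 1 := abs_lt.2 ⟨ha1, ha2⟩
  set L := log (1 - a) / a
  have hcs : (-L) ^ 2 < 1 / (1 - a ^ 2) * (π ^ 2 / 6) := by
    obtain ⟨j, hj⟩ := exists_pow_ne_inv_succ a
    rw [one_div]
    exact sq_lt_mul_of_hasSum_of_not_proportional (hasSum_sq_pow ha) hasSum_inv_succ_sq
      (hasSum_pow_mul_inv_succ ha ha0) (i := 0) (j := j) (by simpa [eq_comm] using hj)
  have hdet : π ^ 2 / (6 * (1 - a ^ 2)) - L ^ 2 = 1 / (1 - a ^ 2) * (π ^ 2 / 6) - (-L) ^ 2 := by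
    rw [neg_sq, one_div_mul_eq_div, div_div]
  have hA : 0 < 1 / (1 - a ^ 2) := one_div_pos.2 (by nlinarith)
  refine ⟨hdet ▸ sub_pos.2 hcs, (posDef_fin_two_of hA hcs).smul (by positivity), ?_⟩
  rw [inv_smul_fin_two_symm, hdet, neg_neg, one_div (_ * _)]
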